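/- Let N ≥ 4 be an integer divisible by 4 and define h(n) = −1 + 12n(N − 2n)/(N² − 4) for integers n. Then for every integer n with 0 ≤ n ≤ N/2, one has ∑_{s=1}^{N/4−1} [h(n) + cos(4πns/N)] / sin²(2πs/N) + (1/2)[h(n) + cos(πn)] = 0. -/

import Mathlib

/-!
With `M = N / 2`, the cosDivSinSq is invariant under `s ↦ M - s` and its value at `s = M / 2` is
`h(n) + cos(πn)`, so the left-hand side is half of
`∑_{0<k<M} (h + cos(2πnk/M)) / sin²(πk/M)`. Since `cos 2θ = 1 - 2 sin² θ`, this full sum is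
`(h + 1) ∑ 1/sin²(πk/M) - 2 F(n)` with the Fejér sum `F(n) = ∑ sin²(πnk/M) / sin²(πk/M)`.
The second difference of `F` in `n` is `2 ∑ cos(2π(n+1)k/M) = -2`, hence `F(n) = n(M - n)`
for `n ≤ M`; summing over `n < M` and using orthogonality in `n` gives
`∑ 1/sin²(πk/M) = (M² - 1)/3`.
Finally `h` is exactly the value for which `(h + 1)(M² - 1)/3 = 2n(M - n)`.
-/

/-- `h(n) = −1 + 12n(N − 2n)/(N² − 4)` -/
noncomputable def hCoef (N : ℕ) (n : ℕ) : ℝ :=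
  -1 + 12 * (n : ℝ) * ((N : ℝ) - 2 * n) / ((N : ℝ) ^ 2 - 4)

open Finset Real

lemma sum_range_cos_two_pi_mul_div {M d : ℕ} (hd : ¬ M ∣ d) :
    ∑ j ∈ range M, cos (2 * π * d * j / M) = 0 := by
  rcases Nat.eq_zero_or_pos M with rfl | hM
  · simp
  have hζ := Complex.isPrimitiveRoot_exp M hM.ne'
  set ζ := Complex.exp (2 * π * Complex.I / M)
  have hζd : ζ ^ d ≠ 1 := by rwa [Ne, hζ.pow_eq_one_iff_dvd]
  have hgeom : ∑ j ∈ range M, (ζ ^ d) ^ j = 0 := by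
    rw [geom_sum_eq hζd, ← pow_mul, mul_comm, pow_mul, hζ.pow_eq_one, one_pow, sub_self,
      zero_div]
  have hterm (j : ℕ) : cos (2 * π * d * j / M) = ((ζ ^ d) ^ j).re := by
    rw [← Complex.exp_ofReal_mul_I_re, ← Complex.exp_nat_mul, ← Complex.exp_nat_mul]
    congr 2
    push_cast
    ring
  simp_rw [hterm, ← Complex.re_sum, hgeom, Complex.zero_re]

lemma sum_Ioo_cos_two_pi_mul_div {M d : ℕ} (hM : 0 < M) (hd : ¬ M ∣ d) :
    ∑ j ∈ Ioo 0 M, cos (2 * π * d * j / M) = -1 := by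
  have h := sum_range_cos_two_pi_mul_div hd
  rw [range_eq_Ico, ← Ioo_insert_left hM, sum_insert left_notMem_Ioo] at h
  simp only [CharP.cast_eq_zero, mul_zero, zero_div, cos_zero] at h
  linarith

lemma sum_range_sin_sq_pi_mul_div {M d : ℕ} (hd : ¬ M ∣ d) :
    ∑ j ∈ range M, sin (π * d * j / M) ^ 2 = M / 2 := by
  have h := sum_range_cos_two_pi_mul_div hd
  simp_rw [sin_sq_eq_half_sub, sum_sub_distrib, ← sum_div, mul_div_assoc', ← mul_assoc, h]
  simp

lemma sin_pi_mul_div_ne_zero {M k : ℕ} (hk : k ∈ Ioo 0 M) : sin (π * k / M) ≠ 0 := by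
  rw [mem_Ioo] at hk
  have hkM : (k : ℝ) < M := by exact_mod_cast hk.2
  have hk0 : (0 : ℝ) < k := by exact_mod_cast hk.1
  refine (sin_pos_of_pos_of_lt_pi (div_pos (mul_pos pi_pos hk0) (hk0.trans hkM)) ?_).ne'
  rw [mul_div_assoc]
  exact mul_lt_of_lt_one_right pi_pos ((div_lt_one (hk0.trans hkM)).2 hkM)

lemma sin_sq_add_sin_sq_sub_sub_two_mul_sin_sq (a y : ℝ) :
    sin (a + y) ^ 2 + sin (a - y) ^ 2 - 2 * sin a ^ 2 = 2 * cos (2 * a) * sin y ^ 2 := by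
  rw [sin_add, sin_sub, cos_two_mul]
  linear_combination (2 * sin a ^ 2) * sin_sq_add_cos_sq y - (2 * sin y ^ 2) * sin_sq_add_cos_sq a

/-- `n` times the Fejér kernel, `sin²(nx/2) / sin²(x/2)`, summed over `x = 2πk/M`, `0 < k < M`. -/
noncomputable def fejerSum (M n : ℕ) : ℝ :=
  ∑ k ∈ Ioo 0 M, sin (π * n * k / M) ^ 2 / sin (π * k / M) ^ 2

section fejerSum

variable {M : ℕ}

lemma fejerSum_zero : fejerSum M 0 = 0 := by
  simp [fejerSum]

lemma fejerSum_one (hM : 0 < M) : fejerSum M 1 = M - 1 := by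
  have h (k : ℕ) (hk : k ∈ Ioo 0 M) :
      sin (π * (1 : ℕ) * k / M) ^ 2 / sin (π * k / M) ^ 2 = 1 := by
    rw [Nat.cast_one, mul_one]
    exact div_self (pow_ne_zero 2 (sin_pi_mul_div_ne_zero hk))
  rw [fejerSum, sum_congr rfl h, sum_const, Nat.card_Ioo, nsmul_one, Nat.cast_sub (by omega)]
  simp

lemma fejerSum_add_two {n : ℕ} (hn : n + 2 ≤ M) :
    fejerSum M (n + 2) + fejerSum M n - 2 * fejerSum M (n + 1) = -2 := by
  have h (k : ℕ) (hk : k ∈ Ioo 0 M) :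
      sin (π * (n + 2 : ℕ) * k / M) ^ 2 / sin (π * k / M) ^ 2
        + sin (π * n * k / M) ^ 2 / sin (π * k / M) ^ 2
        - 2 * (sin (π * (n + 1 : ℕ) * k / M) ^ 2 / sin (π * k / M) ^ 2)
        = 2 * cos (2 * π * (n + 1 : ℕ) * k / M) := by
    have hs := pow_ne_zero 2 (sin_pi_mul_div_ne_zero hk)
    have e₂ : π * (n + 2 : ℕ) * k / M = π * (n + 1 : ℕ) * k / M + π * k / M := by
      push_cast; ring
    have e₀ : π * n * k / M = π * (n + 1 : ℕ) * k / M - π * k / M := by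
      push_cast; ring
    rw [← add_div, mul_div_assoc', ← sub_div, div_eq_iff hs, e₂, e₀,
      sin_sq_add_sin_sq_sub_sub_two_mul_sin_sq]
    congr 3; ring
  rw [fejerSum, fejerSum, fejerSum, mul_sum, ← sum_add_distrib, ← sum_sub_distrib,
    sum_congr rfl h, ← mul_sum,
    sum_Ioo_cos_two_pi_mul_div (by omega) (Nat.not_dvd_of_pos_of_lt (by omega) (by omega))]
  ring

lemma fejerSum_eq {n : ℕ} (hn : n ≤ M) : fejerSum M n = n * (M - n) := by
  induction n using Nat.twoStepInduction with
  | zero => simp [fejerSum_zero]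
  | one => rw [fejerSum_one (by omega)]; ring
  | more n ih₀ ih₁ =>
    have h := fejerSum_add_two (M := M) (n := n) (by omega)
    rw [ih₀ (by omega), ih₁ (by omega)] at h
    push_cast at h ⊢
    linarith

end fejerSum

lemma sum_range_mul_sub (x : ℝ) (M : ℕ) :
    ∑ n ∈ range M, (n : ℝ) * (x - n) = M * (M - 1) * (3 * x - 2 * M + 1) / 6 := by
  induction M with
  | zero => simp
  | succ M ih => rw [sum_range_succ, ih]; push_cast; ring

lemma sum_inv_sin_sq_pi_mul_div {M : ℕ} (hM : 0 < M) :
    ∑ k ∈ Ioo 0 M, (sin (π * k / M) ^ 2)⁻¹ = (M ^ 2 - 1) / 3 := by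
  have hswap :
      ∑ n ∈ range M, fejerSum M n = M / 2 * ∑ k ∈ Ioo 0 M, (sin (π * k / M) ^ 2)⁻¹ := by
    unfold fejerSum
    rw [sum_comm, mul_sum]
    refine sum_congr rfl fun k hk => ?_
    have hkM : ¬ M ∣ k := Nat.not_dvd_of_pos_of_lt (mem_Ioo.1 hk).1 (mem_Ioo.1 hk).2
    rw [← sum_div, div_eq_mul_inv, ← sum_range_sin_sq_pi_mul_div hkM]
    simp_rw [mul_right_comm π]
  have hpoly : ∑ n ∈ range M, fejerSum M n = M * (M ^ 2 - 1) / 6 := by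
    rw [sum_congr rfl fun n hn => fejerSum_eq (mem_range.1 hn).le, sum_range_mul_sub]
    ring
  have hM' : (M : ℝ) ≠ 0 := by positivity
  rw [hpoly] at hswap
  field_simp at hswap ⊢
  linarith

lemma sum_add_cos_div_sin_sq {M n : ℕ} (hM : 0 < M) (hn : n ≤ M) (c : ℝ) :
    ∑ k ∈ Ioo 0 M, (c + cos (2 * π * n * k / M)) / sin (π * k / M) ^ 2
      = (c + 1) * (M ^ 2 - 1) / 3 - 2 * n * (M - n) := by
  have h (k : ℕ) : (c + cos (2 * π * n * k / M)) / sin (π * k / M) ^ 2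
      = (c + 1) * (sin (π * k / M) ^ 2)⁻¹
        - 2 * (sin (π * n * k / M) ^ 2 / sin (π * k / M) ^ 2) := by
    rw [sin_sq_eq_half_sub (π * n * k / M)]
    field_simp
    ring
  rw [sum_congr rfl fun k _ => h k, sum_sub_distrib, ← mul_sum, ← mul_sum,
    sum_inv_sin_sq_pi_mul_div hM, ← fejerSum, fejerSum_eq hn]
  ring

lemma sum_Ioo_two_mul_of_symm {α : Type*} [AddCommMonoid α] {m : ℕ} (hm : 0 < m)
    (f : ℕ → α) (hf : ∀ k ∈ Ioo 0 (2 * m), f (2 * m - k) = f k) :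
    ∑ k ∈ Ioo 0 (2 * m), f k = 2 • ∑ k ∈ Ioo 0 m, f k + f m := by
  have hsplit : Ioo 0 (2 * m) = Ioc 0 m ∪ Ioo m (2 * m) := by
    ext k; simp only [mem_union, mem_Ioo, mem_Ioc]; omega
  have hreflect : ∑ k ∈ Ioo m (2 * m), f k = ∑ k ∈ Ioo 0 m, f k := by
    refine sum_nbij' (2 * m - ·) (2 * m - ·) ?_ ?_ ?_ ?_ fun k hk => ?_
    · intro k hk; simp only [mem_Ioo] at hk ⊢; omega
    · intro k hk; simp only [mem_Ioo] at hk ⊢; omega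
    · intro k hk; simp only [mem_Ioo] at hk; omega
    · intro k hk; simp only [mem_Ioo] at hk; omega
    exact (hf k (by simp only [mem_Ioo] at hk ⊢; omega)).symm
  rw [hsplit, sum_union (disjoint_left.2 fun k hk hk' => by
    simp only [mem_Ioo, mem_Ioc] at hk hk'; omega), hreflect, ← Ioo_insert_right hm,
    sum_insert right_notMem_Ioo, two_smul]
  abel

noncomputable def cosDivSinSq (N n : ℕ) (c : ℝ) (s : ℕ) : ℝ :=
  (c + cos (4 * π * n * s / N)) / sin (2 * π * s / N) ^ 2

section cosDivSinSq

variable {m : ℕ} (n : ℕ) (c : ℝ)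

lemma cosDivSinSq_two_mul_sub (hm : 0 < m) {k : ℕ} (hk : k ≤ 2 * m) :
    cosDivSinSq (4 * m) n c (2 * m - k) = cosDivSinSq (4 * m) n c k := by
  have hcast : ((2 * m - k : ℕ) : ℝ) = 2 * m - k := by push_cast [Nat.cast_sub hk]; ring
  have e₁ : 4 * π * n * (2 * m - k : ℕ) / (4 * m : ℕ)
      = n * (2 * π) - 4 * π * n * k / (4 * m : ℕ) := by
    rw [hcast]; push_cast; field_simp
  have e₂ : 2 * π * (2 * m - k : ℕ) / (4 * m : ℕ) = π - 2 * π * k / (4 * m : ℕ) := by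
    rw [hcast]; push_cast; field_simp; ring
  rw [cosDivSinSq, cosDivSinSq, e₁, e₂, sin_pi_sub, cos_nat_mul_two_pi_sub]

lemma cosDivSinSq_self (hm : 0 < m) : cosDivSinSq (4 * m) n c m = c + cos (π * n) := by
  have e₁ : 4 * π * n * m / (4 * m : ℕ) = π * n := by push_cast; field_simp
  have e₂ : 2 * π * m / (4 * m : ℕ) = π / 2 := by push_cast; field_simp; ring
  rw [cosDivSinSq, e₁, e₂, sin_pi_div_two, one_pow, div_one]

lemma sum_cosDivSinSq (hm : 0 < m) (hn : n ≤ 2 * m) :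
    ∑ k ∈ Ioo 0 (2 * m), cosDivSinSq (4 * m) n c k
      = (c + 1) * ((2 * m : ℕ) ^ 2 - 1) / 3 - 2 * n * ((2 * m : ℕ) - n) := by
  have e₁ (s : ℕ) : 4 * π * n * s / (4 * m : ℕ) = 2 * π * n * s / (2 * m : ℕ) := by
    push_cast; field_simp
  have e₂ (s : ℕ) : 2 * π * s / (4 * m : ℕ) = π * s / (2 * m : ℕ) := by
    push_cast; field_simp; ring
  simp only [cosDivSinSq, e₁, e₂]
  exact sum_add_cos_div_sin_sq (by omega) hn c

end cosDivSinSq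

lemma hCoef_four_mul_add_one_mul (m n : ℕ) (hm : 0 < m) :
    (hCoef (4 * m) n + 1) * ((2 * m : ℕ) ^ 2 - 1) / 3 = 2 * n * ((2 * m : ℕ) - n) := by
  have hm' : (1 : ℝ) ≤ m := by exact_mod_cast hm
  have h : 4 * (m : ℝ) ^ 2 - 1 ≠ 0 := by nlinarith
  rw [hCoef, neg_add_cancel_comm]
  push_cast
  rw [show (4 * m : ℝ) ^ 2 - 4 = 4 * (4 * m ^ 2 - 1) by ring,
    show (2 * m : ℝ) ^ 2 - 1 = 4 * m ^ 2 - 1 by ring]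
  field_simp
  ring

theorem sum_identity_even_relation (N : ℕ) (hN4 : 4 ∣ N) (hN : 4 ≤ N)
    (n : ℕ) (hn : n ≤ N / 2) :
    ∑ s ∈ Finset.Icc 1 (N / 4 - 1),
        (hCoef N n + Real.cos (4 * Real.pi * n * s / N)) /
          Real.sin (2 * Real.pi * s / N) ^ 2
      + (1 / 2) * (hCoef N n + Real.cos (Real.pi * n)) = 0 := by
  obtain ⟨m, rfl⟩ := hN4
  have hm : 0 < m := by omega
  have hpair := sum_Ioo_two_mul_of_symm hm (cosDivSinSq (4 * m) n (hCoef (4 * m) n))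
    fun k hk => cosDivSinSq_two_mul_sub n _ hm (mem_Ioo.1 hk).2.le
  rw [sum_cosDivSinSq n _ hm (by omega), hCoef_four_mul_add_one_mul m n hm, cosDivSinSq_self n _ hm,
    two_smul] at hpair
  have hIcc : Icc 1 (4 * m / 4 - 1) = Ioo 0 m := by ext; simp only [mem_Icc, mem_Ioo]; omega
  rw [hIcc]
  simp only [cosDivSinSq] at hpair
  linarith
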